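/- (Exponential stability of a PIE from a Lyapunov certificate.) Let H := L2([a,b];ℝ^n) for reals a < b and n ∈ ℕ. Let T, A be continuous linear operators on H with T bijective, and suppose there exist α, δ > 0 and a continuous self-adjoint linear operator P on H such that ⟨v, P v⟩ ≥ α‖v‖² for all v ∈ H and ⟨v, (T* P A + A* P T) v⟩ ≤ −δ‖T v‖² for all v ∈ H. Then there exist M, ε > 0 such that every differentiable function x_f : [0,∞) → H satisfying T(x_f'(t)) = A(x_f(t)) for all t ≥ 0 obeys ‖x_f(t)‖ ≤ M ‖x_f(0)‖ e^{−εt} for all t ≥ 0. -/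

import Mathlib

/-!
Put `u := T x`, so that `u' = A x`. The Lyapunov function `V(u) = ⟪u, P u⟫` satisfies
`α‖u‖² ≤ V(u) ≤ β‖u‖²` with `β = ‖P‖ + 1`, and the certificate says
`dV/dt = ⟪x, (T*PA + A*PT) x⟫ ≤ -δ‖u‖²`, hence `dV/dt ≤ -(δ/β) V`. Grönwall's inequality makes
`V`, hence `‖T x‖`, decay exponentially, and `‖x‖ ≤ C ‖T x‖` because a bijective bounded
operator is antilipschitz (bounded inverse theorem).
-/

open MeasureTheory Set
open scoped RealInnerProductSpace

noncomputable section

/-- The real Hilbert space `L2([a,b]; ℝ^n)`. -/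
abbrev HL2 (a b : ℝ) (n : ℕ) :=
  Lp (EuclideanSpace ℝ (Fin n)) 2 (volume.restrict (Set.Icc a b))

theorem le_mul_exp_of_hasDerivWithinAt_le_mul {f f' : ℝ → ℝ} {K : ℝ}
    (hf : ∀ t, 0 ≤ t → HasDerivWithinAt f (f' t) (Ici 0) t)
    (hle : ∀ t, 0 ≤ t → f' t ≤ K * f t) {t : ℝ} (ht : 0 ≤ t) :
    f t ≤ f 0 * Real.exp (K * t) := by
  have hcont : ContinuousOn f (Icc 0 t) := fun s hs =>
    ((hf s hs.1).continuousWithinAt).mono Icc_subset_Ici_self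
  have h := le_gronwallBound_of_liminf_deriv_right_le (ε := 0) hcont
    (fun s hs _ hr => ((hf s hs.1).mono (Ici_subset_Ici.2 hs.1)).liminf_right_slope_le hr)
    le_rfl (fun s hs => by simpa using hle s hs.1) t ⟨ht, le_rfl⟩
  rwa [gronwallBound_ε0, sub_zero] at h

section Lyapunov

variable {E : Type*} [NormedAddCommGroup E] [InnerProductSpace ℝ E]

theorem real_inner_self_apply_le_opNorm_mul_sq (P : E →L[ℝ] E) (v : E) :
    ⟪v, P v⟫ ≤ ‖P‖ * ‖v‖ ^ 2 :=
  calc ⟪v, P v⟫ ≤ ‖v‖ * ‖P v‖ := real_inner_le_norm _ _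
    _ ≤ ‖v‖ * (‖P‖ * ‖v‖) := by gcongr; exact P.le_opNorm v
    _ = ‖P‖ * ‖v‖ ^ 2 := by ring

theorem norm_le_mul_exp_of_lyapunov {P : E →L[ℝ] E} {α β δ : ℝ} (hα : 0 < α) (hβ : 0 < β)
    (hδ : 0 ≤ δ) (hlow : ∀ v, α * ‖v‖ ^ 2 ≤ ⟪v, P v⟫) (hup : ∀ v, ⟪v, P v⟫ ≤ β * ‖v‖ ^ 2)
    {u u' : ℝ → E} (hu : ∀ t, 0 ≤ t → HasDerivWithinAt u (u' t) (Ici 0) t)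
    (hdecr : ∀ t, 0 ≤ t → ⟪u t, P (u' t)⟫ + ⟪u' t, P (u t)⟫ ≤ -δ * ‖u t‖ ^ 2)
    {t : ℝ} (ht : 0 ≤ t) :
    ‖u t‖ ≤ √(β / α) * ‖u 0‖ * Real.exp (-(δ / β / 2) * t) := by
  set V : ℝ → ℝ := fun s => ⟪u s, P (u s)⟫
  have hV : ∀ s, 0 ≤ s → HasDerivWithinAt V (⟪u s, P (u' s)⟫ + ⟪u' s, P (u s)⟫) (Ici 0) s :=
    fun s hs => (hu s hs).inner ℝ ((P.hasFDerivAt (x := u s)).comp_hasDerivWithinAt s (hu s hs))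
  have hV' : ∀ s, 0 ≤ s → ⟪u s, P (u' s)⟫ + ⟪u' s, P (u s)⟫ ≤ -(δ / β) * V s := by
    intro s hs
    have hVs : δ / β * V s ≤ δ * ‖u s‖ ^ 2 := by
      calc δ / β * V s ≤ δ / β * (β * ‖u s‖ ^ 2) := by gcongr; exact hup (u s)
        _ = δ * ‖u s‖ ^ 2 := by field_simp
    linarith [hdecr s hs]
  have hdecay : α * ‖u t‖ ^ 2 ≤ β * ‖u 0‖ ^ 2 * Real.exp (-(δ / β) * t) :=
    calc α * ‖u t‖ ^ 2 ≤ V t := hlow (u t)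
      _ ≤ V 0 * Real.exp (-(δ / β) * t) := le_mul_exp_of_hasDerivWithinAt_le_mul hV hV' ht
      _ ≤ β * ‖u 0‖ ^ 2 * Real.exp (-(δ / β) * t) := by gcongr; exact hup (u 0)
  have hsq : (√(β / α) * ‖u 0‖ * Real.exp (-(δ / β / 2) * t)) ^ 2
      = β / α * ‖u 0‖ ^ 2 * Real.exp (-(δ / β) * t) := by
    rw [mul_pow, mul_pow, Real.sq_sqrt (by positivity), ← Real.exp_nat_mul]
    ring_nf
  refine (pow_le_pow_iff_left₀ (norm_nonneg _) (by positivity) two_ne_zero).1 ?_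
  rw [hsq, div_mul_eq_mul_div, div_mul_eq_mul_div, le_div_iff₀ hα]
  linarith

theorem real_inner_adjoint_comp_add_adjoint_comp_apply [CompleteSpace E] (T A P : E →L[ℝ] E)
    (v : E) :
    ⟪v, ((ContinuousLinearMap.adjoint T ∘L P ∘L A)
        + (ContinuousLinearMap.adjoint A ∘L P ∘L T)) v⟫ = ⟪T v, P (A v)⟫ + ⟪A v, P (T v)⟫ := by
  simp only [add_apply, ContinuousLinearMap.comp_apply, inner_add_right,
    ContinuousLinearMap.adjoint_inner_right]

end Lyapunov

theorem PIE_exponential_stability_from_certificate_general (a b : ℝ) (n : ℕ)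
    (T A : HL2 a b n →L[ℝ] HL2 a b n) (hT : Function.Bijective T)
    (P : HL2 a b n →L[ℝ] HL2 a b n)
    (α δ : ℝ) (hα : 0 < α) (hδ : 0 < δ)
    (hPpos : ∀ v : HL2 a b n, α * ‖v‖ ^ 2 ≤ ⟪v, P v⟫)
    (hdissip : ∀ v : HL2 a b n,
      ⟪v, ((ContinuousLinearMap.adjoint T ∘L P ∘L A)
          + (ContinuousLinearMap.adjoint A ∘L P ∘L T)) v⟫ ≤ -δ * ‖T v‖ ^ 2) :
    ∃ M > (0:ℝ), ∃ ε > (0:ℝ),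
      ∀ xf xf' : ℝ → HL2 a b n,
        (∀ t, 0 ≤ t → HasDerivWithinAt xf (xf' t) (Set.Ici 0) t) →
        (∀ t, 0 ≤ t → T (xf' t) = A (xf t)) →
        ∀ t, 0 ≤ t → ‖xf t‖ ≤ M * ‖xf 0‖ * Real.exp (-ε * t) := by
  obtain ⟨C, hC⟩ := ((T.bijective_iff_dense_range_and_antilipschitz).1 hT).2
  set β := ‖P‖ + 1
  have hβ : 0 < β := by positivity
  have hup : ∀ v, ⟪v, P v⟫ ≤ β * ‖v‖ ^ 2 := fun v =>
    (real_inner_self_apply_le_opNorm_mul_sq P v).trans (by gcongr; linarith)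
  refine ⟨(C + 1) * √(β / α) * (‖T‖ + 1), by positivity, δ / β / 2, by positivity, ?_⟩
  intro xf xf' hxf hPIE t ht
  have hu : ∀ s, 0 ≤ s → HasDerivWithinAt (fun r => T (xf r)) (A (xf s)) (Ici 0) s :=
    fun s hs => hPIE s hs ▸ (T.hasFDerivAt (x := xf s)).comp_hasDerivWithinAt s (hxf s hs)
  have hdecr : ∀ s, 0 ≤ s →
      ⟪T (xf s), P (A (xf s))⟫ + ⟪A (xf s), P (T (xf s))⟫ ≤ -δ * ‖T (xf s)‖ ^ 2 :=
    fun s _ => real_inner_adjoint_comp_add_adjoint_comp_apply T A P (xf s) ▸ hdissip (xf s)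
  have hTdecay := norm_le_mul_exp_of_lyapunov hα hβ hδ.le hPpos hup hu hdecr ht
  calc ‖xf t‖ ≤ C * ‖T (xf t)‖ := T.bound_of_antilipschitz hC _
    _ ≤ C * (√(β / α) * ‖T (xf 0)‖ * Real.exp (-(δ / β / 2) * t)) := by gcongr
    _ ≤ (C + 1) * (√(β / α) * ((‖T‖ + 1) * ‖xf 0‖) * Real.exp (-(δ / β / 2) * t)) := by
      gcongr
      · linarith
      · exact (T.le_opNorm _).trans (by gcongr; linarith)
    _ = (C + 1) * √(β / α) * (‖T‖ + 1) * ‖xf 0‖ * Real.exp (-(δ / β / 2) * t) := by ring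

/-- exponential stability of a PIE from a Lyapunov certificate.
Let `H := L2([a,b];ℝ^n)`, let `T, A` be continuous linear operators on `H` with `T`
bijective, and suppose there exist `α, δ > 0` and a continuous self-adjoint operator `P`
on `H` with `⟨v, P v⟩ ≥ α‖v‖²` and `⟨v, (T* P A + A* P T) v⟩ ≤ −δ‖T v‖²` for all `v`.
Then there are `M, ε > 0` such that every differentiable `x_f : [0,∞) → H` with
`T(x_f'(t)) = A(x_f(t))` for all `t ≥ 0` obeys `‖x_f(t)‖ ≤ M ‖x_f(0)‖ e^{−εt}`. -/
theorem PIE_exponential_stability_from_certificate (a b : ℝ) (hab : a < b) (n : ℕ)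
    (T A : HL2 a b n →L[ℝ] HL2 a b n) (hT : Function.Bijective T)
    (P : HL2 a b n →L[ℝ] HL2 a b n) (hP : IsSelfAdjoint P)
    (α δ : ℝ) (hα : 0 < α) (hδ : 0 < δ)
    (hPpos : ∀ v : HL2 a b n, α * ‖v‖ ^ 2 ≤ ⟪v, P v⟫)
    (hdissip : ∀ v : HL2 a b n,
      ⟪v, ((ContinuousLinearMap.adjoint T ∘L P ∘L A)
          + (ContinuousLinearMap.adjoint A ∘L P ∘L T)) v⟫ ≤ -δ * ‖T v‖ ^ 2) :
    ∃ M > (0:ℝ), ∃ ε > (0:ℝ),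
      ∀ xf xf' : ℝ → HL2 a b n,
        (∀ t, 0 ≤ t → HasDerivWithinAt xf (xf' t) (Set.Ici 0) t) →
        (∀ t, 0 ≤ t → T (xf' t) = A (xf t)) →
        ∀ t, 0 ≤ t → ‖xf t‖ ≤ M * ‖xf 0‖ * Real.exp (-ε * t) :=
  PIE_exponential_stability_from_certificate_general a b n T A hT P α δ hα hδ hPpos hdissip
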